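/- Let X ⊆ ℝⁿ be open, let k : X × X → ℝ be a symmetric C² kernel satisfying k(x,x) = 1 for all x ∈ X and ∂k(x,y)/∂x_i |_{y=x} = 0 for all x ∈ X and all i, and let D : X → ℝ be C¹. Then the metric induced by the conformally transformed kernel k̃(x,y) = D(x)·D(y)·k(x,y) is g̃_ij(x) = D(x)²·g_ij(x) + D_i(x)·D_j(x), where g_ij(x) = ∂²k(x,y)/∂x_i ∂y_j |_{y=x} and D_i(x) = ∂D/∂x_i (x). -/

import Mathlib

/-- Partial derivative of a two-variable kernel with respect to the `i`-th
coordinate of the first argument: `∂k(x,y)/∂x_i`. -/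
noncomputable def pderivFst {n : ℕ} (k : (Fin n → ℝ) → (Fin n → ℝ) → ℝ)
    (i : Fin n) (x y : Fin n → ℝ) : ℝ :=
  deriv (fun t : ℝ => k (x + t • (Pi.single i 1 : Fin n → ℝ)) y) 0

/-- Partial derivative of a scalar function: `D_i(x) = ∂D(x)/∂x_i`. -/
noncomputable def pderiv' {n : ℕ} (D : (Fin n → ℝ) → ℝ) (i : Fin n)
    (x : Fin n → ℝ) : ℝ :=
  deriv (fun t : ℝ => D (x + t • (Pi.single i 1 : Fin n → ℝ))) 0

/-- The Riemannian metric induced by a kernel `k`: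
`g_ij(x) = ∂²k(x,y)/∂x_i∂y_j` evaluated at `y = x`. -/
noncomputable def inducedMetric {n : ℕ} (k : (Fin n → ℝ) → (Fin n → ℝ) → ℝ)
    (i j : Fin n) (x : Fin n → ℝ) : ℝ :=
  deriv (fun s : ℝ => pderivFst k i x (x + s • (Pi.single j 1 : Fin n → ℝ))) 0

/-!
By the product rule along `t ↦ x + t eᵢ`, the first-slot partial of `k̃` is
`∂ᵢk̃(x, y) = Dᵢ(x) D(y) k(x, y) + D(x) D(y) ∂ᵢk(x, y)` for `y` near `x`. Differentiating this
in `y` along `eⱼ` at `y = x` produces four terms. The one containing `∂ᵢk(x, x)` vanishes by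
hypothesis, and so does the one containing the derivative of `k(x, ·)` along `eⱼ`: as `k` is
constant on the diagonal, that derivative equals `-∂ⱼk(x, x) = 0`. What is left is
`Dᵢ(x) Dⱼ(x) k(x, x) + D(x)² gᵢⱼ(x)`, and `k(x, x) = 1`.
-/

open Filter Topology

section LineDerivAlgebra

variable {𝕜 E : Type*} [NontriviallyNormedField 𝕜] [AddCommGroup E] [Module 𝕜 E]
  {f g : E → 𝕜} {f' g' : 𝕜} {x v : E}

theorem HasLineDerivAt.add (hf : HasLineDerivAt 𝕜 f f' x v) (hg : HasLineDerivAt 𝕜 g g' x v) :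
    HasLineDerivAt 𝕜 (fun y => f y + g y) (f' + g') x v :=
  HasDerivAt.add hf hg

theorem HasLineDerivAt.mul (hf : HasLineDerivAt 𝕜 f f' x v) (hg : HasLineDerivAt 𝕜 g g' x v) :
    HasLineDerivAt 𝕜 (fun y => f y * g y) (f' * g x + f x * g') x v := by
  have h := HasDerivAt.mul hf hg
  rwa [zero_smul, add_zero] at h

theorem HasLineDerivAt.const_mul (c : 𝕜) (hf : HasLineDerivAt 𝕜 f f' x v) :
    HasLineDerivAt 𝕜 (fun y => c * f y) (c * f') x v :=
  HasDerivAt.const_mul c hf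

theorem HasLineDerivAt.mul_const (hf : HasLineDerivAt 𝕜 f f' x v) (c : 𝕜) :
    HasLineDerivAt 𝕜 (fun y => f y * c) (f' * c) x v :=
  HasDerivAt.mul_const hf c

end LineDerivAlgebra

section TwoVariable

variable {𝕜 E F G : Type*} [NontriviallyNormedField 𝕜]
  [NormedAddCommGroup E] [NormedSpace 𝕜 E] [NormedAddCommGroup F] [NormedSpace 𝕜 F]
  [NormedAddCommGroup G] [NormedSpace 𝕜 G] {k : E → F → G}

theorem HasFDerivAt.hasLineDerivAt_fst {L : E × F →L[𝕜] G} {x : E} {y : F}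
    (h : HasFDerivAt (fun p : E × F => k p.1 p.2) L (x, y)) (v : E) :
    HasLineDerivAt 𝕜 (fun u => k u y) (L (v, 0)) x v := by
  have hslice : HasFDerivAt (fun u => k u y) (L.comp (.inl 𝕜 E F)) x :=
    h.comp (f := fun u => (u, y)) x (hasFDerivAt_prodMk_left x y)
  exact hslice.hasLineDerivAt v

theorem HasFDerivAt.hasLineDerivAt_snd {L : E × F →L[𝕜] G} {x : E} {y : F}
    (h : HasFDerivAt (fun p : E × F => k p.1 p.2) L (x, y)) (v : F) :
    HasLineDerivAt 𝕜 (k x) (L (0, v)) y v := by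
  have hslice : HasFDerivAt (k x) (L.comp (.inr 𝕜 E F)) y :=
    h.comp y (hasFDerivAt_prodMk_right x y)
  exact hslice.hasLineDerivAt v

theorem ContDiffAt.differentiableAt_lineDeriv_fst {x : E} {y : F}
    (h : ContDiffAt 𝕜 2 (fun p : E × F => k p.1 p.2) (x, y)) (v : E) :
    DifferentiableAt 𝕜 (fun y' => lineDeriv 𝕜 (fun u => k u y') x v) y := by
  set K := fun p : E × F => k p.1 p.2
  have hslice :
      ∀ᶠ y' in 𝓝 y, lineDeriv 𝕜 (fun u => k u y') x v = fderiv 𝕜 K (x, y') (v, 0) := by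
    have hpath : Tendsto (fun y' => (x, y')) (𝓝 y) (𝓝 (x, y)) :=
      (continuous_const.prodMk continuous_id).tendsto y
    filter_upwards [hpath.eventually (h.eventually (by simp))] with y' hy'
    exact ((hy'.differentiableAt two_ne_zero).hasFDerivAt.hasLineDerivAt_fst v).lineDeriv
  have hfderiv : DifferentiableAt 𝕜 (fun y' => fderiv 𝕜 K (x, y')) y :=
    ((h.fderiv_right (m := 1) le_rfl).differentiableAt one_ne_zero).comp y
      (differentiableAt_const x |>.prodMk differentiableAt_id)
  exact (hfderiv.clm_apply (differentiableAt_const _)).congr_of_eventuallyEq hslice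

end TwoVariable

section Diagonal

variable {𝕜 E G : Type*} [NontriviallyNormedField 𝕜]
  [NormedAddCommGroup E] [NormedSpace 𝕜 E] [NormedAddCommGroup G] [NormedSpace 𝕜 G]
  {k : E → E → G}

theorem DifferentiableAt.hasLineDerivAt_snd_of_diag_const {x : E} {c : G}
    (h : DifferentiableAt 𝕜 (fun p : E × E => k p.1 p.2) (x, x))
    (hdiag : ∀ᶠ u in 𝓝 x, k u u = c) (v : E) :
    HasLineDerivAt 𝕜 (k x) (-lineDeriv 𝕜 (fun u => k u x) x v) x v := by
  set L := fderiv 𝕜 (fun p : E × E => k p.1 p.2) (x, x)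
  have hL := h.hasFDerivAt
  have hdiag' : L (v, v) = 0 := by
    have hcomp : HasFDerivAt (fun u => k u u)
        (L.comp ((ContinuousLinearMap.id 𝕜 E).prod (ContinuousLinearMap.id 𝕜 E))) x :=
      hL.comp (f := fun u => (u, u)) x ((hasFDerivAt_id x).prodMk (hasFDerivAt_id x))
    exact (hcomp.hasLineDerivAt v).unique
      (((hasFDerivAt_const c x).hasLineDerivAt v).congr_of_eventuallyEq hdiag)
  rw [(hL.hasLineDerivAt_fst v).lineDeriv]
  convert hL.hasLineDerivAt_snd v using 1
  rw [neg_eq_iff_add_eq_zero, ← map_add, Prod.mk_add_mk, add_zero, zero_add, hdiag']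

end Diagonal

theorem pderivFst_eq_lineDeriv {n : ℕ} (k : (Fin n → ℝ) → (Fin n → ℝ) → ℝ) (i : Fin n)
    (x y : Fin n → ℝ) : pderivFst k i x y = lineDeriv ℝ (fun u => k u y) x (Pi.single i 1) :=
  rfl

theorem inducedMetric_eq_lineDeriv {n : ℕ} (k : (Fin n → ℝ) → (Fin n → ℝ) → ℝ) (i j : Fin n)
    (x : Fin n → ℝ) : inducedMetric k i j x = lineDeriv ℝ (pderivFst k i x) x (Pi.single j 1) :=
  rfl

theorem conformal_inducedMetric_of_diag_one_general {n : ℕ} (X : Set (Fin n → ℝ))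
    (hX : IsOpen X) (k : (Fin n → ℝ) → (Fin n → ℝ) → ℝ) (D : (Fin n → ℝ) → ℝ)
    (hk : ContDiffOn ℝ 2 (fun p : (Fin n → ℝ) × (Fin n → ℝ) => k p.1 p.2) (X ×ˢ X))
    (hdiag : ∀ x ∈ X, k x x = 1)
    (hfd : ∀ x ∈ X, ∀ i : Fin n, pderivFst k i x x = 0)
    (hD : ContDiffOn ℝ 1 D X) (x : Fin n → ℝ) (hx : x ∈ X) (i j : Fin n) :
    inducedMetric (fun u v => D u * D v * k u v) i j x =
      D x ^ 2 * inducedMetric k i j x + pderiv' D i x * pderiv' D j x := by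
  have hkAt : ∀ y ∈ X, ContDiffAt ℝ 2 (fun p : (Fin n → ℝ) × (Fin n → ℝ) => k p.1 p.2) (x, y) :=
    fun y hy => hk.contDiffAt ((hX.prod hX).mem_nhds ⟨hx, hy⟩)
  have hDx : DifferentiableAt ℝ D x :=
    (hD.contDiffAt (hX.mem_nhds hx)).differentiableAt one_ne_zero
  have hDi : HasLineDerivAt ℝ D (pderiv' D i x) x (Pi.single i 1) :=
    hDx.lineDifferentiableAt.hasLineDerivAt
  have hDj : HasLineDerivAt ℝ D (pderiv' D j x) x (Pi.single j 1) :=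
    hDx.lineDifferentiableAt.hasLineDerivAt
  have hfst : pderivFst (fun u v => D u * D v * k u v) i x =ᶠ[𝓝 x]
      fun y => pderiv' D i x * D y * k x y + D x * D y * pderivFst k i x y := by
    filter_upwards [hX.mem_nhds hx] with y hy
    have hky : HasLineDerivAt ℝ (fun u => k u y) (pderivFst k i x y) x (Pi.single i 1) :=
      ((hkAt y hy).differentiableAt two_ne_zero).hasFDerivAt.hasLineDerivAt_fst _
        |>.lineDifferentiableAt.hasLineDerivAt
    exact ((hDi.mul_const (D y)).mul hky).lineDeriv
  have hsnd : HasLineDerivAt ℝ (k x) 0 x (Pi.single j 1) := by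
    simpa only [← pderivFst_eq_lineDeriv, hfd x hx j, neg_zero] using
      ((hkAt x hx).differentiableAt two_ne_zero).hasLineDerivAt_snd_of_diag_const
        (eventually_of_mem (hX.mem_nhds hx) hdiag) (Pi.single j 1)
  have hmetric : HasLineDerivAt ℝ (pderivFst k i x) (inducedMetric k i j x) x (Pi.single j 1) :=
    ((hkAt x hx).differentiableAt_lineDeriv_fst _).lineDifferentiableAt.hasLineDerivAt
  rw [inducedMetric_eq_lineDeriv, hfst.lineDeriv_eq,
    (((hDj.const_mul _).mul hsnd).add ((hDj.const_mul _).mul hmetric)).lineDeriv,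
    hdiag x hx, hfd x hx i]
  ring

/-- For a symmetric `C²` kernel `k` on an open set `X ⊆ ℝⁿ`
with `k(x,x) = 1` and vanishing first partial derivatives on the diagonal, and a
`C¹` function `D`, the metric induced by the conformally transformed kernel
`k̃(x,y) = D(x)D(y)k(x,y)` is `g̃_ij(x) = D(x)²g_ij(x) + D_i(x)D_j(x)`. -/
theorem conformal_inducedMetric_of_diag_one {n : ℕ} (X : Set (Fin n → ℝ))
    (hX : IsOpen X) (k : (Fin n → ℝ) → (Fin n → ℝ) → ℝ) (D : (Fin n → ℝ) → ℝ)
    (hsymm : ∀ x ∈ X, ∀ y ∈ X, k x y = k y x)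
    (hk : ContDiffOn ℝ 2 (fun p : (Fin n → ℝ) × (Fin n → ℝ) => k p.1 p.2) (X ×ˢ X))
    (hdiag : ∀ x ∈ X, k x x = 1)
    (hfd : ∀ x ∈ X, ∀ i : Fin n, pderivFst k i x x = 0)
    (hD : ContDiffOn ℝ 1 D X) (x : Fin n → ℝ) (hx : x ∈ X) (i j : Fin n) :
    inducedMetric (fun u v => D u * D v * k u v) i j x =
      D x ^ 2 * inducedMetric k i j x + pderiv' D i x * pderiv' D j x :=
  conformal_inducedMetric_of_diag_one_general X hX k D hk hdiag hfd hD x hx i j
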